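/- For 0 < α < 1, f.p.∫_0^∞ x^{α-2}/(1+x²) dx = −(π/2)/cos(πα/2). -/

import Mathlib

/-!
Since `x ^ (α - 2) / (1 + x ^ 2) = x ^ (α - 2) - x ^ α / (1 + x ^ 2)` and
`∫_ε^∞ x ^ (α - 2) = ε ^ (α - 1) / (1 - α)`, the expression under the limit is exactly
`-∫_ε^∞ x ^ α / (1 + x ^ 2)`, whose integrand is integrable at `0`. The finite part is therefore
`-∫_0^∞ x ^ α / (1 + x ^ 2)`. Substituting `x = √t` and then `t = y / (1 - y)` turns this integral
into half the Beta integral `B((α + 1) / 2, (1 - α) / 2)`, which the reflection formula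
`Γ(s) Γ(1 - s) = π / sin (π s)` evaluates.
-/

open MeasureTheory Real Set Filter Topology

lemma tendsto_setIntegral_Ioi_nhdsGT {E : Type*} [NormedAddCommGroup E] [NormedSpace ℝ E]
    {f : ℝ → E} {a : ℝ} (hf : IntegrableOn f (Ioi a)) :
    Tendsto (fun e => ∫ x in Ioi e, f x) (𝓝[>] a) (𝓝 (∫ x in Ioi a, f x)) := by
  have hf' : IntervalIntegrable f volume a (a + 1) :=
    (intervalIntegrable_iff_integrableOn_Ioc_of_le (by linarith)).2
      (hf.mono_set Ioc_subset_Ioi_self)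
  have hprim : Tendsto (fun e => ∫ x in a..e, f x) (𝓝[>] a) (𝓝 0) := by
    have hc := intervalIntegral.continuousWithinAt_primitive (a := a) (b₁ := a) (b₂ := a + 1)
      (measure_singleton a) (by rwa [min_self, max_eq_right (by linarith)])
    simpa using hc.tendsto.mono_left (nhdsWithin_le_of_mem (Icc_mem_nhdsGT (by linarith)))
  have hdiff := (tendsto_const_nhds (x := ∫ x in Ioi a, f x)).sub hprim
  rw [sub_zero] at hdiff
  refine hdiff.congr' ?_
  filter_upwards [self_mem_nhdsWithin] with e (he : a < e)
  rw [← intervalIntegral.integral_Ioi_sub_Ioi hf he.le, sub_sub_cancel]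

lemma integral_Ioo_zero_one_eq_integral_Ioi {E : Type*} [NormedAddCommGroup E]
    [NormedSpace ℝ E] (g : ℝ → E) :
    ∫ x in Ioo 0 1, g x = ∫ t in Ioi 0, ((1 + t) ^ 2)⁻¹ • g (t / (1 + t)) := by
  have himage : (fun t : ℝ => t / (1 + t)) '' Ioi 0 = Ioo 0 1 := by
    ext y
    constructor
    · rintro ⟨t, ht : 0 < t, rfl⟩
      exact ⟨by positivity, (div_lt_one (by positivity)).2 (by linarith)⟩
    · rintro ⟨hy₀, hy₁⟩
      have : 1 - y ≠ 0 := by linarith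
      refine ⟨y / (1 - y), div_pos hy₀ (by linarith), ?_⟩
      field_simp
      ring
  have hderiv : ∀ t ∈ Ioi (0 : ℝ),
      HasDerivWithinAt (fun t : ℝ => t / (1 + t)) (((1 + t) ^ 2)⁻¹) (Ioi 0) t := by
    intro t (ht : 0 < t)
    have h := (hasDerivAt_id' t).div ((hasDerivAt_id' t).const_add 1)
      (by positivity : (1 : ℝ) + t ≠ 0)
    rw [show ((1 + t) ^ 2)⁻¹ = (1 * (1 + t) - t * 1) / (1 + t) ^ 2 by ring]
    exact h.hasDerivWithinAt
  have hinj : InjOn (fun t : ℝ => t / (1 + t)) (Ioi 0) := by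
    intro a (ha : 0 < a) b (hb : 0 < b) h
    have : (1 : ℝ) + a ≠ 0 := by positivity
    have : (1 : ℝ) + b ≠ 0 := by positivity
    field_simp at h
    linarith
  rw [← himage, integral_image_eq_integral_abs_deriv_smul measurableSet_Ioi hderiv hinj]
  refine setIntegral_congr_fun measurableSet_Ioi fun t _ => ?_
  rw [abs_of_nonneg (by positivity)]

lemma integral_Ioo_rpow_mul_one_sub_rpow {u v : ℝ} (hu : 0 < u) (hv : 0 < v) :
    ∫ x in Ioo 0 1, x ^ (u - 1) * (1 - x) ^ (v - 1) = Gamma u * Gamma v / Gamma (u + v) := by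
  have hbeta := Complex.betaIntegral_eq_Gamma_mul_div u v (by simpa) (by simpa)
  rw [Complex.betaIntegral, intervalIntegral.integral_of_le zero_le_one,
    integral_Ioc_eq_integral_Ioo] at hbeta
  have hcast : ∀ x ∈ Ioo (0 : ℝ) 1, (x : ℂ) ^ ((u : ℂ) - 1) * (1 - (x : ℂ)) ^ ((v : ℂ) - 1)
      = ((x ^ (u - 1) * (1 - x) ^ (v - 1) : ℝ) : ℂ) := by
    rintro x ⟨hx₀, hx₁⟩
    rw [Complex.ofReal_mul, Complex.ofReal_cpow hx₀.le, Complex.ofReal_cpow (by linarith)]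
    push_cast
    rfl
  rw [setIntegral_congr_fun measurableSet_Ioo hcast, integral_complex_ofReal, ← Complex.ofReal_add,
    Complex.Gamma_ofReal, Complex.Gamma_ofReal, Complex.Gamma_ofReal] at hbeta
  exact_mod_cast hbeta

lemma integral_Ioi_rpow_div_one_add_rpow {u v : ℝ} (hu : 0 < u) (hv : 0 < v) :
    ∫ t in Ioi 0, t ^ (u - 1) / (1 + t) ^ (u + v) = Gamma u * Gamma v / Gamma (u + v) := by
  rw [← integral_Ioo_rpow_mul_one_sub_rpow hu hv, integral_Ioo_zero_one_eq_integral_Ioi]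
  refine setIntegral_congr_fun measurableSet_Ioi fun t (ht : 0 < t) => ?_
  have h₁ : 0 < 1 + t := by linarith
  rw [smul_eq_mul, one_sub_div h₁.ne', add_sub_cancel_right, div_rpow ht.le h₁.le,
    div_rpow zero_le_one h₁.le, one_rpow, ← rpow_natCast, ← rpow_neg h₁.le]
  field_simp
  rw [← rpow_add h₁, ← rpow_add h₁]
  ring_nf

lemma integral_Ioi_rpow_div_one_add {s : ℝ} (hs₀ : 0 < s) (hs₁ : s < 1) :
    ∫ t in Ioi 0, t ^ (s - 1) / (1 + t) = π / sin (π * s) := by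
  have h := integral_Ioi_rpow_div_one_add_rpow hs₀ (sub_pos.2 hs₁)
  simpa only [add_sub_cancel, rpow_one, Gamma_one, div_one, Gamma_mul_Gamma_one_sub] using h

lemma rpow_sub_two_div_one_add_sq {x : ℝ} (hx : 0 < x) (α : ℝ) :
    x ^ (α - 2) / (1 + x ^ 2) = x ^ (α - 2) - x ^ α / (1 + x ^ 2) := by
  have hpow : x ^ α = x ^ (α - 2) * x ^ 2 := by
    rw [← rpow_natCast x 2, ← rpow_add hx]; norm_num
  rw [hpow]
  field_simp
  ring

lemma rpow_div_one_add_sq_le_rpow {x : ℝ} (hx : 0 ≤ x) (α : ℝ) :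
    x ^ α / (1 + x ^ 2) ≤ x ^ α :=
  div_le_self (rpow_nonneg hx α) (by nlinarith)

lemma rpow_div_one_add_sq_le_rpow_sub_two {x : ℝ} (hx : 0 < x) (α : ℝ) :
    x ^ α / (1 + x ^ 2) ≤ x ^ (α - 2) := by
  have hnonneg : 0 ≤ x ^ (α - 2) / (1 + x ^ 2) := by positivity
  linarith [rpow_sub_two_div_one_add_sq hx α]

lemma continuousOn_rpow_div_one_add_sq (α : ℝ) :
    ContinuousOn (fun x : ℝ => x ^ α / (1 + x ^ 2)) (Ioi 0) := fun x hx =>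
  ((continuousAt_rpow_const x α (Or.inl (ne_of_gt hx))).div (by fun_prop)
    (by positivity)).continuousWithinAt

lemma integrableOn_Ioc_rpow_div_one_add_sq {α : ℝ} (hα : -1 < α) (b : ℝ) :
    IntegrableOn (fun x : ℝ => x ^ α / (1 + x ^ 2)) (Ioc 0 b) := by
  rcases le_total b 0 with hb | hb
  · simp [Ioc_eq_empty_of_le hb]
  have hdom : IntegrableOn (fun x : ℝ => x ^ α) (Ioc 0 b) :=
    (intervalIntegrable_iff_integrableOn_Ioc_of_le hb).1
      (intervalIntegral.intervalIntegrable_rpow' hα)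
  refine hdom.mono' (ContinuousOn.aestronglyMeasurable
    ((continuousOn_rpow_div_one_add_sq α).mono Ioc_subset_Ioi_self) measurableSet_Ioc) ?_
  filter_upwards [ae_restrict_mem measurableSet_Ioc] with x ⟨hx, _⟩
  rw [norm_of_nonneg (by positivity)]
  exact rpow_div_one_add_sq_le_rpow hx.le α

lemma integrableOn_Ioi_rpow_div_one_add_sq {α : ℝ} (hα : α < 1) {a : ℝ} (ha : 0 < a) :
    IntegrableOn (fun x : ℝ => x ^ α / (1 + x ^ 2)) (Ioi a) := by
  refine (integrableOn_Ioi_rpow_of_lt (by linarith : α - 2 < -1) ha).mono'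
    (ContinuousOn.aestronglyMeasurable
      ((continuousOn_rpow_div_one_add_sq α).mono (Ioi_subset_Ioi ha.le)) measurableSet_Ioi) ?_
  filter_upwards [ae_restrict_mem measurableSet_Ioi] with x (hx : a < x)
  have hx₀ : 0 < x := ha.trans hx
  rw [norm_of_nonneg (by positivity)]
  exact rpow_div_one_add_sq_le_rpow_sub_two hx₀ α

lemma integrableOn_Ioi_zero_rpow_div_one_add_sq {α : ℝ} (hα₀ : -1 < α) (hα₁ : α < 1) :
    IntegrableOn (fun x : ℝ => x ^ α / (1 + x ^ 2)) (Ioi 0) := by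
  rw [← Ioc_union_Ioi_eq_Ioi zero_le_one]
  exact (integrableOn_Ioc_rpow_div_one_add_sq hα₀ 1).union
    (integrableOn_Ioi_rpow_div_one_add_sq hα₁ one_pos)

lemma integral_Ioi_rpow_div_one_add_sq {α : ℝ} (hα₀ : -1 < α) (hα₁ : α < 1) :
    ∫ x in Ioi 0, x ^ α / (1 + x ^ 2) = π / 2 / cos (π * α / 2) := by
  have h := integral_comp_rpow_Ioi_of_pos (g := fun t : ℝ => t ^ ((α + 1) / 2 - 1) / (1 + t))
    two_pos
  rw [integral_Ioi_rpow_div_one_add (by linarith) (by linarith),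
    show π * ((α + 1) / 2) = π * α / 2 + π / 2 by ring, sin_add_pi_div_two] at h
  rw [div_right_comm, ← h, eq_div_iff two_ne_zero, ← integral_mul_const]
  refine setIntegral_congr_fun measurableSet_Ioi fun x (hx : 0 < x) => ?_
  rw [smul_eq_mul, ← rpow_mul hx.le, rpow_two, show (2 : ℝ) - 1 = 1 by norm_num, rpow_one,
    show 2 * ((α + 1) / 2 - 1) = α - 1 by ring, rpow_sub_one hx.ne']
  field_simp

lemma integral_Ioi_rpow_sub_two_div_one_add_sq {α : ℝ} (hα : α < 1) {e : ℝ} (he : 0 < e) :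
    (∫ x in Ioi e, x ^ (α - 2) / (1 + x ^ 2))
      = e ^ (α - 1) / (1 - α) - ∫ x in Ioi e, x ^ α / (1 + x ^ 2) := by
  rw [setIntegral_congr_fun measurableSet_Ioi
      fun x hx => rpow_sub_two_div_one_add_sq (he.trans hx) α,
    integral_sub (integrableOn_Ioi_rpow_of_lt (by linarith) he)
      (integrableOn_Ioi_rpow_div_one_add_sq hα he),
    integral_Ioi_rpow_of_lt (by linarith) he]
  congr 1
  rw [show α - 2 + 1 = α - 1 by ring, neg_div, ← div_neg, neg_sub]

theorem stmt_13 (α : ℝ) (hα0 : 0 < α) (hα1 : α < 1) :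
    Tendsto (fun e : ℝ =>
        (∫ x in Ioi e, x ^ (α - 2) / (1 + x ^ 2)) - e ^ (α - 1) / (1 - α))
      (𝓝[>] 0) (𝓝 (-(Real.pi / 2) / Real.cos (Real.pi * α / 2))) := by
  have hlim := (tendsto_setIntegral_Ioi_nhdsGT
    (integrableOn_Ioi_zero_rpow_div_one_add_sq (by linarith) hα1)).neg
  rw [integral_Ioi_rpow_div_one_add_sq (by linarith) hα1, ← neg_div] at hlim
  refine hlim.congr' ?_
  filter_upwards [self_mem_nhdsWithin] with e (he : 0 < e)
  rw [integral_Ioi_rpow_sub_two_div_one_add_sq hα1 he]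
  ring
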